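/- arXiv:2410.11969 — 2 statements merged into one kernel-verified Lean document; each statement's English description precedes it below -/
import Mathlib

section
/- Let φ₁, φ₂ : ℝ → ℝ be smooth and nowhere zero, and define f₁(x¹,x²) = φ₁(x²), f₂(x¹,x²) = φ₂(x¹). Let W¹, W² : ℝ → ℝ be smooth and define V¹(x¹,x²) = W¹(x²), V²(x¹,x²) = W²(x¹). Then (V¹, V²) satisfies the Killing system for (f₁, f₂) if and only if there exist constants k, c₁, c₂ ∈ ℝ and functions F₁, F₂ : ℝ → ℝ with F₁' = φ₁² and F₂' = φ₂² such that: W¹(t) = (k·F₁(t) + c₁)/φ₁(t) for all t, W²(s) = −(k·F₂(s) + c₂)/φ₂(s) for all s, and φ₁'(t)·W²(s) = 0 and φ₂'(s)·W¹(t) = 0 for all s, t ∈ ℝ. -/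
open Real

/-- Partial derivative in the `x¹` direction on `ℝ²`. -/
noncomputable def pd1 (f : ℝ × ℝ → ℝ) (p : ℝ × ℝ) : ℝ := fderiv ℝ f p (1, 0)

/-- Partial derivative in the `x²` direction on `ℝ²`. -/
noncomputable def pd2 (f : ℝ × ℝ → ℝ) (p : ℝ × ℝ) : ℝ := fderiv ℝ f p (0, 1)

/-- `(V¹, V²)` satisfies the Killing system for `(f₁, f₂)`, i.e. `V = V¹E₁ + V²E₂` is a
Killing vector field for the metric `g = f₁⁻² dx¹⊗dx¹ + f₂⁻² dx²⊗dx²` on `ℝ²`. -/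
def KillingSystem (f₁ f₂ V₁ V₂ : ℝ × ℝ → ℝ) : Prop :=
  ∀ p : ℝ × ℝ,
    f₁ p * pd1 V₁ p - f₂ p / f₁ p * pd2 f₁ p * V₂ p = 0 ∧
    f₂ p * pd2 V₂ p - f₁ p / f₂ p * pd1 f₂ p * V₁ p = 0 ∧
    f₁ p * pd1 V₂ p + f₂ p * pd2 V₁ p + f₂ p / f₁ p * pd2 f₁ p * V₁ p
      + f₁ p / f₂ p * pd1 f₂ p * V₂ p = 0


lemma fderiv_snd_comp (g : ℝ → ℝ) (hg : Differentiable ℝ g) (p : ℝ × ℝ) :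
    fderiv ℝ (fun q : ℝ × ℝ => g q.2) p
      = deriv g p.2 • (ContinuousLinearMap.snd ℝ ℝ ℝ) :=
  ((hg p.2).hasDerivAt.comp_hasFDerivAt p hasFDerivAt_snd).fderiv

lemma fderiv_fst_comp (g : ℝ → ℝ) (hg : Differentiable ℝ g) (p : ℝ × ℝ) :
    fderiv ℝ (fun q : ℝ × ℝ => g q.1) p
      = deriv g p.1 • (ContinuousLinearMap.fst ℝ ℝ ℝ) :=
  ((hg p.1).hasDerivAt.comp_hasFDerivAt p hasFDerivAt_fst).fderiv

lemma pd1_snd (g : ℝ → ℝ) (hg : Differentiable ℝ g) (p : ℝ × ℝ) :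
    pd1 (fun q : ℝ × ℝ => g q.2) p = 0 := by
  simp [pd1, fderiv_snd_comp g hg p]

lemma pd2_snd (g : ℝ → ℝ) (hg : Differentiable ℝ g) (p : ℝ × ℝ) :
    pd2 (fun q : ℝ × ℝ => g q.2) p = deriv g p.2 := by
  simp [pd2, fderiv_snd_comp g hg p]

lemma pd1_fst (g : ℝ → ℝ) (hg : Differentiable ℝ g) (p : ℝ × ℝ) :
    pd1 (fun q : ℝ × ℝ => g q.1) p = deriv g p.1 := by
  simp [pd1, fderiv_fst_comp g hg p]

lemma pd2_fst (g : ℝ → ℝ) (hg : Differentiable ℝ g) (p : ℝ × ℝ) :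
    pd2 (fun q : ℝ × ℝ => g q.1) p = 0 := by
  simp [pd2, fderiv_fst_comp g hg p]

/-- If `f₁ = φ₁(x²)`, `f₂ = φ₂(x¹)`, `V¹ = W¹(x²)`, `V² = W²(x¹)`, then `V` is a Killing
vector field iff `W¹ = (k·F₁ + c₁)/φ₁`, `W² = −(k·F₂ + c₂)/φ₂` with `F₁' = φ₁²`,
`F₂' = φ₂²`, and `φ₁'·W² = φ₂'·W¹ = 0`. -/
theorem killing_iff_of_crossed_dependence (φ₁ φ₂ : ℝ → ℝ)
    (hφ₁ : ContDiff ℝ (⊤ : ℕ∞) φ₁) (hφ₂ : ContDiff ℝ (⊤ : ℕ∞) φ₂)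
    (hφ₁0 : ∀ t, φ₁ t ≠ 0) (hφ₂0 : ∀ t, φ₂ t ≠ 0)
    (W₁ W₂ : ℝ → ℝ) (hW₁ : ContDiff ℝ (⊤ : ℕ∞) W₁) (hW₂ : ContDiff ℝ (⊤ : ℕ∞) W₂) :
    KillingSystem (fun p => φ₁ p.2) (fun p => φ₂ p.1)
      (fun p => W₁ p.2) (fun p => W₂ p.1) ↔
    ∃ k c₁ c₂ : ℝ, ∃ F₁ F₂ : ℝ → ℝ,
      (∀ t, HasDerivAt F₁ (φ₁ t ^ 2) t) ∧ (∀ s, HasDerivAt F₂ (φ₂ s ^ 2) s) ∧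
      (∀ t, W₁ t = (k * F₁ t + c₁) / φ₁ t) ∧
      (∀ s, W₂ s = -(k * F₂ s + c₂) / φ₂ s) ∧
      (∀ s t : ℝ, deriv φ₁ t * W₂ s = 0 ∧ deriv φ₂ s * W₁ t = 0) := by
  have dφ₁ : Differentiable ℝ φ₁ := hφ₁.differentiable (by simp)
  have dφ₂ : Differentiable ℝ φ₂ := hφ₂.differentiable (by simp)
  have dW₁ : Differentiable ℝ W₁ := hW₁.differentiable (by simp)
  have dW₂ : Differentiable ℝ W₂ := hW₂.differentiable (by simp)
  constructor
  · intro h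
    simp only [KillingSystem, pd1_snd _ dW₁, pd2_snd _ dW₁, pd1_fst _ dW₂, pd2_fst _ dW₂,
      pd2_snd _ dφ₁, pd1_fst _ dφ₂] at h
    have e1 : ∀ s t : ℝ, deriv φ₁ t * W₂ s = 0 := by
      intro s t
      have h1 := (h (s, t)).1
      simp only [Prod.fst, Prod.snd] at h1
      have h2 : φ₂ s / φ₁ t * (deriv φ₁ t * W₂ s) = 0 := by linear_combination -h1
      rcases mul_eq_zero.1 h2 with h' | h'
      · exact absurd h' (div_ne_zero (hφ₂0 s) (hφ₁0 t))
      · exact h'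
    have e2 : ∀ s t : ℝ, deriv φ₂ s * W₁ t = 0 := by
      intro s t
      have h1 := (h (s, t)).2.1
      simp only [Prod.fst, Prod.snd] at h1
      have h2 : φ₁ t / φ₂ s * (deriv φ₂ s * W₁ t) = 0 := by linear_combination -h1
      rcases mul_eq_zero.1 h2 with h' | h'
      · exact absurd h' (div_ne_zero (hφ₁0 t) (hφ₂0 s))
      · exact h'
    have e3 : ∀ s t : ℝ,
        φ₁ t ^ 2 * (deriv φ₂ s * W₂ s + φ₂ s * deriv W₂ s)
          + φ₂ s ^ 2 * (deriv φ₁ t * W₁ t + φ₁ t * deriv W₁ t) = 0 := by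
      intro s t
      have h1 := (h (s, t)).2.2
      simp only [Prod.fst, Prod.snd] at h1
      have h2 : φ₁ t ^ 2 * (deriv φ₂ s * W₂ s + φ₂ s * deriv W₂ s)
          + φ₂ s ^ 2 * (deriv φ₁ t * W₁ t + φ₁ t * deriv W₁ t)
          = φ₁ t * φ₂ s * (φ₁ t * deriv W₂ s + φ₂ s * deriv W₁ t
            + φ₂ s / φ₁ t * deriv φ₁ t * W₁ t + φ₁ t / φ₂ s * deriv φ₂ s * W₂ s) := by
        field_simp [hφ₁0 t, hφ₂0 s]
        ring
      rw [h2, h1, mul_zero]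
    set k : ℝ := (deriv φ₁ 0 * W₁ 0 + φ₁ 0 * deriv W₁ 0) / φ₁ 0 ^ 2 with hkdef
    have hB : ∀ s, deriv φ₂ s * W₂ s + φ₂ s * deriv W₂ s = -(k * φ₂ s ^ 2) := by
      intro s
      have h1 := e3 s 0
      rw [hkdef, div_mul_eq_mul_div, ← neg_div, eq_div_iff (pow_ne_zero 2 (hφ₁0 0))]
      linear_combination h1
    have hA : ∀ t, deriv φ₁ t * W₁ t + φ₁ t * deriv W₁ t = k * φ₁ t ^ 2 := by
      intro t
      have h1 := e3 0 t
      have h3 : (deriv φ₁ t * W₁ t + φ₁ t * deriv W₁ t) * φ₂ 0 ^ 2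
          = k * φ₁ t ^ 2 * φ₂ 0 ^ 2 := by
        linear_combination h1 - φ₁ t ^ 2 * hB 0
      exact mul_right_cancel₀ (pow_ne_zero 2 (hφ₂0 0)) h3
    set F₁ : ℝ → ℝ := fun t => ∫ x in (0:ℝ)..t, φ₁ x ^ 2 with hF₁def
    set F₂ : ℝ → ℝ := fun s => ∫ x in (0:ℝ)..s, φ₂ x ^ 2 with hF₂def
    have hcont₁ : Continuous fun x => φ₁ x ^ 2 := (hφ₁.continuous).pow 2
    have hcont₂ : Continuous fun x => φ₂ x ^ 2 := (hφ₂.continuous).pow 2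
    have hF₁ : ∀ t, HasDerivAt F₁ (φ₁ t ^ 2) t := fun t =>
      intervalIntegral.integral_hasDerivAt_right (hcont₁.intervalIntegrable 0 t)
        (hcont₁.stronglyMeasurableAtFilter _ _) hcont₁.continuousAt
    have hF₂ : ∀ s, HasDerivAt F₂ (φ₂ s ^ 2) s := fun s =>
      intervalIntegral.integral_hasDerivAt_right (hcont₂.intervalIntegrable 0 s)
        (hcont₂.stronglyMeasurableAtFilter _ _) hcont₂.continuousAt
    have hconst₁ : ∀ t, φ₁ t * W₁ t = k * F₁ t + φ₁ 0 * W₁ 0 := by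
      have hg : ∀ x, HasDerivAt
          (fun t => φ₁ t * W₁ t - (k * F₁ t + φ₁ 0 * W₁ 0)) 0 x := by
        intro x
        have h1 : HasDerivAt (fun t => φ₁ t * W₁ t)
            (deriv φ₁ x * W₁ x + φ₁ x * deriv W₁ x) x :=
          ((dφ₁ x).hasDerivAt).mul ((dW₁ x).hasDerivAt)
        have h2 : HasDerivAt (fun t => k * F₁ t + φ₁ 0 * W₁ 0) (k * φ₁ x ^ 2) x :=
          ((hF₁ x).const_mul k).add_const _
        have h3 := h1.sub h2
        rwa [hA x, sub_self] at h3
      intro t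
      have hc := is_const_of_deriv_eq_zero (f := fun t => φ₁ t * W₁ t - (k * F₁ t + φ₁ 0 * W₁ 0))
        (fun x => (hg x).differentiableAt) (fun x => (hg x).deriv) t 0
      have hF₁0 : F₁ 0 = 0 := intervalIntegral.integral_same
      simp only [hF₁0] at hc
      linarith [hc]
    have hconst₂ : ∀ s, φ₂ s * W₂ s = -(k * F₂ s + -(φ₂ 0 * W₂ 0)) := by
      have hg : ∀ x, HasDerivAt
          (fun s => φ₂ s * W₂ s + (k * F₂ s + -(φ₂ 0 * W₂ 0))) 0 x := by
        intro x
        have h1 : HasDerivAt (fun s => φ₂ s * W₂ s)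
            (deriv φ₂ x * W₂ x + φ₂ x * deriv W₂ x) x :=
          ((dφ₂ x).hasDerivAt).mul ((dW₂ x).hasDerivAt)
        have h2 : HasDerivAt (fun s => k * F₂ s + -(φ₂ 0 * W₂ 0)) (k * φ₂ x ^ 2) x :=
          ((hF₂ x).const_mul k).add_const _
        have h3 := h1.add h2
        rw [hB x] at h3
        rwa [neg_add_cancel] at h3
      intro s
      have hc := is_const_of_deriv_eq_zero
        (f := fun s => φ₂ s * W₂ s + (k * F₂ s + -(φ₂ 0 * W₂ 0)))
        (fun x => (hg x).differentiableAt) (fun x => (hg x).deriv) s 0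
      have hF₂0 : F₂ 0 = 0 := intervalIntegral.integral_same
      simp only [hF₂0] at hc
      linarith [hc]
    refine ⟨k, φ₁ 0 * W₁ 0, -(φ₂ 0 * W₂ 0), F₁, F₂, hF₁, hF₂, ?_, ?_,
      fun s t => ⟨e1 s t, e2 s t⟩⟩
    · intro t
      rw [eq_div_iff (hφ₁0 t)]
      linear_combination hconst₁ t
    · intro s
      rw [eq_div_iff (hφ₂0 s)]
      linear_combination hconst₂ s
  · rintro ⟨k, c₁, c₂, F₁, F₂, hF₁, hF₂, hw₁, hw₂, hz⟩
    have hkey₁ : ∀ t, φ₁ t * deriv W₁ t = k * φ₁ t ^ 2 - deriv φ₁ t * W₁ t := by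
      intro t
      have hfun : (fun t => φ₁ t * W₁ t) = fun t => k * F₁ t + c₁ := by
        funext x
        rw [hw₁ x]
        field_simp [hφ₁0 x]
      have h1 : HasDerivAt (fun t => φ₁ t * W₁ t) (k * φ₁ t ^ 2) t := by
        rw [hfun]; exact ((hF₁ t).const_mul k).add_const c₁
      have h2 : HasDerivAt (fun t => φ₁ t * W₁ t)
          (deriv φ₁ t * W₁ t + φ₁ t * deriv W₁ t) t :=
        ((dφ₁ t).hasDerivAt).mul ((dW₁ t).hasDerivAt)
      have := h1.unique h2
      linarith
    have hkey₂ : ∀ s, φ₂ s * deriv W₂ s = -(k * φ₂ s ^ 2) - deriv φ₂ s * W₂ s := by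
      intro s
      have hfun : (fun s => φ₂ s * W₂ s) = fun s => -(k * F₂ s + c₂) := by
        funext x
        rw [hw₂ x]
        field_simp [hφ₂0 x]
      have h1 : HasDerivAt (fun s => φ₂ s * W₂ s) (-(k * φ₂ s ^ 2)) s := by
        rw [hfun]; exact (((hF₂ s).const_mul k).add_const c₂).neg
      have h2 : HasDerivAt (fun s => φ₂ s * W₂ s)
          (deriv φ₂ s * W₂ s + φ₂ s * deriv W₂ s) s :=
        ((dφ₂ s).hasDerivAt).mul ((dW₂ s).hasDerivAt)
      have := h1.unique h2
      linarith
    intro p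
    obtain ⟨s, t⟩ := p
    simp only [pd1_snd _ dW₁, pd2_snd _ dW₁, pd1_fst _ dW₂, pd2_fst _ dW₂,
      pd2_snd _ dφ₁, pd1_fst _ dφ₂, Prod.fst, Prod.snd]
    refine ⟨?_, ?_, ?_⟩
    · linear_combination (-(φ₂ s / φ₁ t)) * (hz s t).1
    · linear_combination (-(φ₁ t / φ₂ s)) * (hz s t).2
    · field_simp [hφ₁0 t, hφ₂0 s]
      linear_combination φ₁ t ^ 2 * hkey₂ s + φ₂ s ^ 2 * hkey₁ t
end

section
/- Let φ₁ : ℝ → ℝ be smooth and nowhere zero, let k₂ ∈ ℝ \ {0}, and define f₁(x¹,x²) = φ₁(x¹), f₂(x¹,x²) = k₂. Then smooth functions V¹, V² : ℝ² → ℝ satisfy the Killing system for (f₁, f₂) if and only if there exist constants k, c₁, c₂ ∈ ℝ and a function F₂ : ℝ → ℝ with F₂' = 1/φ₁ such that V¹(x¹,x²) = −(k/k₂)·x² + c₁ and V²(x¹,x²) = k·F₂(x¹) + c₂ for all (x¹,x²) ∈ ℝ². -/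
open Real

/-- fderiv of a function of the first coordinate. -/
lemma hasFDerivAt_comp_fst {f : ℝ → ℝ} {d : ℝ} {p : ℝ × ℝ} (hf : HasDerivAt f d p.1) :
    HasFDerivAt (fun q : ℝ × ℝ => f q.1) (d • ContinuousLinearMap.fst ℝ ℝ ℝ) p :=
  hf.comp_hasFDerivAt p (hasFDerivAt_fst)

lemma hasFDerivAt_comp_snd {f : ℝ → ℝ} {d : ℝ} {p : ℝ × ℝ} (hf : HasDerivAt f d p.2) :
    HasFDerivAt (fun q : ℝ × ℝ => f q.2) (d • ContinuousLinearMap.snd ℝ ℝ ℝ) p :=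
  hf.comp_hasFDerivAt p (hasFDerivAt_snd)

lemma pd1_comp_fst {f : ℝ → ℝ} {d : ℝ} {p : ℝ × ℝ} (hf : HasDerivAt f d p.1) :
    pd1 (fun q : ℝ × ℝ => f q.1) p = d := by
  rw [pd1, (hasFDerivAt_comp_fst hf).fderiv]; simp

lemma pd2_comp_fst {f : ℝ → ℝ} {d : ℝ} {p : ℝ × ℝ} (hf : HasDerivAt f d p.1) :
    pd2 (fun q : ℝ × ℝ => f q.1) p = 0 := by
  rw [pd2, (hasFDerivAt_comp_fst hf).fderiv]; simp

lemma pd1_comp_snd {f : ℝ → ℝ} {d : ℝ} {p : ℝ × ℝ} (hf : HasDerivAt f d p.2) :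
    pd1 (fun q : ℝ × ℝ => f q.2) p = 0 := by
  rw [pd1, (hasFDerivAt_comp_snd hf).fderiv]; simp

lemma pd2_comp_snd {f : ℝ → ℝ} {d : ℝ} {p : ℝ × ℝ} (hf : HasDerivAt f d p.2) :
    pd2 (fun q : ℝ × ℝ => f q.2) p = d := by
  rw [pd2, (hasFDerivAt_comp_snd hf).fderiv]; simp

lemma pd1_const {c : ℝ} {p : ℝ × ℝ} : pd1 (fun _ : ℝ × ℝ => c) p = 0 := by
  rw [pd1, fderiv_fun_const]; simp

lemma pd2_const {c : ℝ} {p : ℝ × ℝ} : pd2 (fun _ : ℝ × ℝ => c) p = 0 := by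
  rw [pd2, fderiv_fun_const]; simp

/-- The slice `t ↦ V (t, y)` has derivative `pd1 V (t, y)`. -/
lemma hasDerivAt_slice1 {V : ℝ × ℝ → ℝ} (hV : Differentiable ℝ V) (t y : ℝ) :
    HasDerivAt (fun s => V (s, y)) (pd1 V (t, y)) t := by
  have h1 : HasDerivAt (fun s : ℝ => (s, y)) ((1 : ℝ), (0 : ℝ)) t :=
    (hasDerivAt_id t).prodMk (hasDerivAt_const t y)
  exact ((hV (t, y)).hasFDerivAt.comp_hasDerivAt t h1)

lemma hasDerivAt_slice2 {V : ℝ × ℝ → ℝ} (hV : Differentiable ℝ V) (x t : ℝ) :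
    HasDerivAt (fun s => V (x, s)) (pd2 V (x, t)) t := by
  have h1 : HasDerivAt (fun s : ℝ => (x, s)) ((0 : ℝ), (1 : ℝ)) t :=
    (hasDerivAt_const t x).prodMk (hasDerivAt_id t)
  exact ((hV (x, t)).hasFDerivAt.comp_hasDerivAt t h1)

/-- A function with constant derivative is affine. -/
lemma eq_affine_of_hasDerivAt_const {f : ℝ → ℝ} {c : ℝ}
    (hf : ∀ x, HasDerivAt f c x) (x : ℝ) : f x = c * x + f 0 := by
  have hlin : ∀ y : ℝ, HasDerivAt (fun x : ℝ => c * x) c y := fun y => by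
    simpa using (hasDerivAt_id y).const_mul c
  have h : ∀ y, deriv (fun x => f x - c * x) y = 0 := by
    intro y
    have : HasDerivAt (fun x => f x - c * x) (c - c) y := (hf y).sub (hlin y)
    simpa using this.deriv
  have hd : Differentiable ℝ (fun x => f x - c * x) := fun y =>
    ((hf y).sub (hlin y)).differentiableAt
  have := is_const_of_deriv_eq_zero hd h x 0
  simp only [mul_zero, sub_zero] at this
  linarith

/-- If `f` and `g` have the same derivative everywhere, they differ by a constant. -/
lemma sub_const_of_hasDerivAt_eq {f g : ℝ → ℝ} {d : ℝ → ℝ}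
    (hf : ∀ x, HasDerivAt f (d x) x) (hg : ∀ x, HasDerivAt g (d x) x) (x : ℝ) :
    f x = g x + (f 0 - g 0) := by
  have h : ∀ y, deriv (fun x => f x - g x) y = 0 := by
    intro y
    have : HasDerivAt (fun x => f x - g x) (d y - d y) y := (hf y).sub (hg y)
    simpa using this.deriv
  have hd : Differentiable ℝ (fun x => f x - g x) := fun y =>
    ((hf y).sub (hg y)).differentiableAt
  have := is_const_of_deriv_eq_zero hd h x 0
  linarith

/-- If `f₁ = φ₁(x¹)` and `f₂ ≡ k₂ ≠ 0`, then `(V¹,V²)` satisfies the Killing system iff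
`V¹ = −(k/k₂)x² + c₁` and `V² = k·F₂(x¹) + c₂` with `F₂' = 1/φ₁`. -/
theorem killing_iff_of_f₁x₁_f₂const (φ₁ : ℝ → ℝ)
    (hφ₁ : ContDiff ℝ (⊤ : ℕ∞) φ₁) (hφ₁0 : ∀ t, φ₁ t ≠ 0) (k₂ : ℝ) (hk₂ : k₂ ≠ 0)
    (V₁ V₂ : ℝ × ℝ → ℝ) (hV₁ : ContDiff ℝ (⊤ : ℕ∞) V₁) (hV₂ : ContDiff ℝ (⊤ : ℕ∞) V₂) :
    KillingSystem (fun p => φ₁ p.1) (fun _ => k₂) V₁ V₂ ↔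
    ∃ k c₁ c₂ : ℝ, ∃ F₂ : ℝ → ℝ, (∀ s, HasDerivAt F₂ (1 / φ₁ s) s) ∧
      ∀ p : ℝ × ℝ, V₁ p = -(k / k₂) * p.2 + c₁ ∧ V₂ p = k * F₂ p.1 + c₂ := by
  have hφd : Differentiable ℝ φ₁ := hφ₁.differentiable (by simp)
  have hV₁d : Differentiable ℝ V₁ := hV₁.differentiable (by simp)
  have hV₂d : Differentiable ℝ V₂ := hV₂.differentiable (by simp)
  -- F₂ : an antiderivative of 1/φ₁
  have hcont : Continuous fun t => 1 / φ₁ t :=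
    continuous_const.div hφ₁.continuous hφ₁0
  set F₂ : ℝ → ℝ := fun s => ∫ t in (0:ℝ)..s, 1 / φ₁ t with hF₂def
  have hF₂ : ∀ s, HasDerivAt F₂ (1 / φ₁ s) s := fun s =>
    (hcont.integral_hasStrictDerivAt 0 s).hasDerivAt
  have hpd2f₁ : ∀ p : ℝ × ℝ, pd2 (fun q : ℝ × ℝ => φ₁ q.1) p = 0 := fun p =>
    pd2_comp_fst (hφd p.1).hasDerivAt
  constructor
  · intro hK
    -- extract the three simplified equations
    have hK1 : ∀ p : ℝ × ℝ, pd1 V₁ p = 0 := by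
      intro p
      have := (hK p).1
      rw [hpd2f₁ p] at this
      simp only [mul_zero, zero_mul, sub_zero] at this
      exact (mul_eq_zero.1 this).resolve_left (hφ₁0 p.1)
    have hK2 : ∀ p : ℝ × ℝ, pd2 V₂ p = 0 := by
      intro p
      have := (hK p).2.1
      rw [show pd1 (fun _ : ℝ × ℝ => k₂) p = 0 from pd1_const] at this
      simp only [mul_zero, zero_mul, sub_zero] at this
      exact (mul_eq_zero.1 this).resolve_left hk₂
    have hK3 : ∀ p : ℝ × ℝ, φ₁ p.1 * pd1 V₂ p + k₂ * pd2 V₁ p = 0 := by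
      intro p
      have := (hK p).2.2
      rw [hpd2f₁ p, show pd1 (fun _ : ℝ × ℝ => k₂) p = 0 from pd1_const] at this
      simp only [mul_zero, zero_mul, add_zero] at this
      linarith
    -- V₁ depends only on x², V₂ only on x¹
    have hV₁slice : ∀ x y : ℝ, V₁ (x, y) = V₁ (0, y) := by
      intro x y
      have hd : Differentiable ℝ (fun s => V₁ (s, y)) := fun t =>
        (hasDerivAt_slice1 hV₁d t y).differentiableAt
      have h0 : ∀ t, deriv (fun s => V₁ (s, y)) t = 0 := fun t => by
        rw [(hasDerivAt_slice1 hV₁d t y).deriv]; exact hK1 (t, y)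
      exact is_const_of_deriv_eq_zero hd h0 x 0
    have hV₂slice : ∀ x y : ℝ, V₂ (x, y) = V₂ (x, 0) := by
      intro x y
      have hd : Differentiable ℝ (fun s => V₂ (x, s)) := fun t =>
        (hasDerivAt_slice2 hV₂d x t).differentiableAt
      have h0 : ∀ t, deriv (fun s => V₂ (x, s)) t = 0 := fun t => by
        rw [(hasDerivAt_slice2 hV₂d x t).deriv]; exact hK2 (x, t)
      exact is_const_of_deriv_eq_zero hd h0 y 0
    -- pd2 V₁ independent of x; pd1 V₂ independent of y
    have hpd2V₁ : ∀ x y : ℝ, pd2 V₁ (x, y) = pd2 V₁ (0, y) := by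
      intro x y
      have h1 : HasDerivAt (fun s => V₁ (0, s)) (pd2 V₁ (x, y)) y := by
        have := hasDerivAt_slice2 hV₁d x y
        have heq : (fun s => V₁ (x, s)) = fun s => V₁ (0, s) := funext fun s => hV₁slice x s
        rwa [heq] at this
      exact h1.unique (hasDerivAt_slice2 hV₁d 0 y)
    have hpd1V₂ : ∀ x y : ℝ, pd1 V₂ (x, y) = pd1 V₂ (x, 0) := by
      intro x y
      have h1 : HasDerivAt (fun s => V₂ (s, 0)) (pd1 V₂ (x, y)) x := by
        have := hasDerivAt_slice1 hV₂d x y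
        have heq : (fun s => V₂ (s, y)) = fun s => V₂ (s, 0) := funext fun s => hV₂slice s y
        rwa [heq] at this
      exact h1.unique (hasDerivAt_slice1 hV₂d x 0)
    -- separation constant
    set k : ℝ := φ₁ 0 * pd1 V₂ (0, 0) with hkdef
    have hsep : ∀ x y : ℝ, φ₁ x * pd1 V₂ (x, 0) + k₂ * pd2 V₁ (0, y) = 0 := by
      intro x y
      have := hK3 (x, y)
      rwa [hpd1V₂ x y, hpd2V₁ x y] at this
    have hu' : ∀ y : ℝ, pd2 V₁ (0, y) = -(k / k₂) := by
      intro y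
      have h1 := hsep 0 y
      rw [hkdef, ← neg_div, eq_div_iff hk₂]
      linear_combination h1
    have hv' : ∀ x : ℝ, φ₁ x * pd1 V₂ (x, 0) = k := by
      intro x
      have h1 := hsep x 0
      have h2 := hsep 0 0
      rw [hkdef]; linarith
    -- V₁ affine in x²
    have hder₁ : ∀ t : ℝ, HasDerivAt (fun s => V₁ (0, s)) (-(k / k₂)) t := fun t => by
      have := hasDerivAt_slice2 hV₁d 0 t
      rwa [hu' t] at this
    have hV₁form : ∀ y : ℝ, V₁ (0, y) = -(k / k₂) * y + V₁ (0, 0) := fun y =>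
      eq_affine_of_hasDerivAt_const hder₁ y
    -- V₂ = k F₂ + const
    have hder₂ : ∀ t : ℝ, HasDerivAt (fun s => V₂ (s, 0)) (k * (1 / φ₁ t)) t := fun t => by
      have h := hasDerivAt_slice1 hV₂d t 0
      have heq : pd1 V₂ (t, 0) = k * (1 / φ₁ t) := by
        rw [mul_one_div, eq_div_iff (hφ₁0 t)]
        linear_combination hv' t
      rwa [heq] at h
    have hV₂form : ∀ x : ℝ, V₂ (x, 0) = k * F₂ x + (V₂ (0, 0) - k * F₂ 0) := fun x =>
      sub_const_of_hasDerivAt_eq hder₂ (fun t => (hF₂ t).const_mul k) x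
    refine ⟨k, V₁ (0, 0), V₂ (0, 0) - k * F₂ 0, F₂, hF₂, fun p => ⟨?_, ?_⟩⟩
    · rw [show p = (p.1, p.2) from rfl, hV₁slice p.1 p.2, hV₁form p.2]
    · rw [show p = (p.1, p.2) from rfl, hV₂slice p.1 p.2, hV₂form p.1]
  · rintro ⟨k, c₁, c₂, F, hF, hVeq⟩
    have hV₁eq : V₁ = fun p : ℝ × ℝ => -(k / k₂) * p.2 + c₁ := funext fun p => (hVeq p).1
    have hV₂eq : V₂ = fun p : ℝ × ℝ => k * F p.1 + c₂ := funext fun p => (hVeq p).2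
    intro p
    have hd1 : HasDerivAt (fun s => -(k / k₂) * s + c₁) (-(k / k₂)) p.2 := by
      simpa using (((hasDerivAt_id p.2).const_mul (-(k / k₂))).add_const c₁)
    have hd2 : HasDerivAt (fun s => k * F s + c₂) (k * (1 / φ₁ p.1)) p.1 :=
      ((hF p.1).const_mul k).add_const c₂
    have hpd1V₁ : pd1 V₁ p = 0 := by rw [hV₁eq]; exact pd1_comp_snd hd1
    have hpd2V₁ : pd2 V₁ p = -(k / k₂) := by rw [hV₁eq]; exact pd2_comp_snd hd1
    have hpd1V₂ : pd1 V₂ p = k * (1 / φ₁ p.1) := by rw [hV₂eq]; exact pd1_comp_fst hd2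
    have hpd2V₂ : pd2 V₂ p = 0 := by rw [hV₂eq]; exact pd2_comp_fst hd2
    refine ⟨?_, ?_, ?_⟩
    · rw [hpd1V₁, hpd2f₁ p]; ring
    · rw [hpd2V₂, show pd1 (fun _ : ℝ × ℝ => k₂) p = 0 from pd1_const]; ring
    · rw [hpd1V₂, hpd2V₁, hpd2f₁ p, show pd1 (fun _ : ℝ × ℝ => k₂) p = 0 from pd1_const]
      field_simp [hφ₁0 p.1]
      ring
end
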